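/- arXiv:2504.15763 — 4 statements merged into one kernel-verified Lean document; each statement's English description precedes it below -/
import Mathlib

section
/- Let g : (0,∞) → [0,∞) be a non-increasing, right-continuous function, and let C > 0, α > 0 and λ ∈ (0,1] be constants such that t·g(t+s) ≤ C·g(s)^{1+α} for every s > 0 and every t with 0 ≤ t ≤ λ. Assume that there exist S₀ > 0 and t₀ with 0 ≤ t₀ ≤ λ satisfying g(S₀)^α < t₀/(2C). Then g(S) = 0 for all S ≥ S₀ + t₀/(1 − 2^{−α}). -/
/-!
Starting from `S₀`, advance by the steps `τ(s) = 2 C g(s)^α`. The hypothesis with `t = τ(s)` gives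
`τ(s) g(s + τ(s)) ≤ C g(s)^{1+α} = τ(s) g(s) / 2`, so every step halves `g`, and hence shrinks the
next step by the factor `2^{-α}`. The steps therefore stay below `λ`, their total is at most
`τ(S₀) / (1 - 2^{-α}) < t₀ / (1 - 2^{-α})`, and `g(S) ≤ 2^{-j} g(S₀)` for every `j`.
-/

open Finset Filter

namespace DeGiorgi

noncomputable def stepLength (g : ℝ → ℝ) (C α s : ℝ) : ℝ := 2 * C * g s ^ α

noncomputable def seq (g : ℝ → ℝ) (C α S₀ : ℝ) (j : ℕ) : ℝ := (fun s ↦ s + stepLength g C α s)^[j] S₀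

variable {g : ℝ → ℝ} {C α lam S₀ : ℝ}

lemma seq_zero : seq g C α S₀ 0 = S₀ := rfl

lemma seq_succ (j : ℕ) :
    seq g C α S₀ (j + 1) = seq g C α S₀ j + stepLength g C α (seq g C α S₀ j) :=
  Function.iterate_succ_apply' _ _ _

lemma stepLength_nonneg {s : ℝ} (hC : 0 ≤ C) (hs : 0 ≤ g s) : 0 ≤ stepLength g C α s := by
  unfold stepLength
  positivity

lemma le_seq (hnonneg : ∀ s, 0 < s → 0 ≤ g s) (hC : 0 ≤ C) (hS₀ : 0 < S₀) (j : ℕ) :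
    S₀ ≤ seq g C α S₀ j := by
  induction j with
  | zero => exact le_rfl
  | succ j ih =>
    rw [seq_succ]
    linarith [stepLength_nonneg (α := α) hC (hnonneg _ (hS₀.trans_le ih))]

lemma apply_add_stepLength_le_half {s : ℝ} (hmono : ∀ s t, 0 < s → s ≤ t → g t ≤ g s)
    (hC : 0 < C) (hs : 0 < s) (hgs : 0 ≤ g s)
    (hiter : stepLength g C α s * g (stepLength g C α s + s) ≤ C * g s ^ (1 + α)) :
    g (s + stepLength g C α s) ≤ g s / 2 := by
  rcases hgs.eq_or_lt with hzero | hpos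
  · rw [← hzero, zero_div, hzero]
    exact hmono _ _ hs (le_add_of_nonneg_right (stepLength_nonneg hC.le hgs))
  · have hτ : 0 < stepLength g C α s := by
      unfold stepLength
      positivity
    rw [Real.rpow_add hpos, Real.rpow_one, add_comm] at hiter
    refine le_of_mul_le_mul_left (hiter.trans_eq ?_) hτ
    unfold stepLength
    ring

lemma stepLength_le_of_le_half {s t : ℝ} (hC : 0 ≤ C) (hα : 0 ≤ α) (ht : 0 ≤ g t)
    (hts : g t ≤ g s / 2) :
    stepLength g C α t ≤ 2 ^ (-α) * stepLength g C α s := by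
  have hs : 0 ≤ g s := by linarith
  have hrpow : g t ^ α ≤ 2 ^ (-α) * g s ^ α := by
    calc g t ^ α ≤ (g s / 2) ^ α := Real.rpow_le_rpow ht hts hα
      _ = 2 ^ (-α) * g s ^ α := by
        rw [Real.div_rpow hs zero_le_two, Real.rpow_neg zero_le_two, div_eq_inv_mul]
  unfold stepLength
  nlinarith

lemma two_rpow_neg_pow_mul_le {x : ℝ} (hα : 0 ≤ α) (hx : 0 ≤ x) (j : ℕ) :
    ((2 : ℝ) ^ (-α)) ^ j * x ≤ x :=
  mul_le_of_le_one_left hx (pow_le_one₀ (Real.rpow_nonneg zero_le_two _)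
    (Real.rpow_le_one_of_one_le_of_nonpos one_le_two (neg_nonpos.mpr hα)))

lemma apply_seq_succ_le_half (hmono : ∀ s t, 0 < s → s ≤ t → g t ≤ g s)
    (hnonneg : ∀ s, 0 < s → 0 ≤ g s) (hC : 0 < C)
    (hiter : ∀ s t, 0 < s → 0 ≤ t → t ≤ lam → t * g (t + s) ≤ C * g s ^ (1 + α))
    (hS₀ : 0 < S₀) {j : ℕ} (hlam : stepLength g C α (seq g C α S₀ j) ≤ lam) :
    g (seq g C α S₀ (j + 1)) ≤ g (seq g C α S₀ j) / 2 := by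
  have hpos : 0 < seq g C α S₀ j := hS₀.trans_le (le_seq hnonneg hC.le hS₀ j)
  have hgpos := hnonneg _ hpos
  rw [seq_succ]
  exact apply_add_stepLength_le_half hmono hC hpos hgpos
    (hiter _ _ hpos (stepLength_nonneg hC.le hgpos) hlam)

lemma stepLength_seq_le (hmono : ∀ s t, 0 < s → s ≤ t → g t ≤ g s)
    (hnonneg : ∀ s, 0 < s → 0 ≤ g s) (hC : 0 < C) (hα : 0 ≤ α)
    (hiter : ∀ s t, 0 < s → 0 ≤ t → t ≤ lam → t * g (t + s) ≤ C * g s ^ (1 + α))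
    (hS₀ : 0 < S₀) (hlam : stepLength g C α S₀ ≤ lam) (j : ℕ) :
    stepLength g C α (seq g C α S₀ j) ≤ (2 ^ (-α)) ^ j * stepLength g C α S₀ := by
  have hL₀ : 0 ≤ stepLength g C α S₀ := stepLength_nonneg hC.le (hnonneg _ hS₀)
  induction j with
  | zero => simp [seq_zero]
  | succ j ih =>
    have hj : stepLength g C α (seq g C α S₀ j) ≤ lam :=
      calc _ ≤ (2 ^ (-α)) ^ j * stepLength g C α S₀ := ih
        _ ≤ stepLength g C α S₀ := two_rpow_neg_pow_mul_le hα hL₀ j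
        _ ≤ lam := hlam
    have hpos : 0 < seq g C α S₀ (j + 1) := hS₀.trans_le (le_seq hnonneg hC.le hS₀ _)
    calc _ ≤ 2 ^ (-α) * stepLength g C α (seq g C α S₀ j) :=
          stepLength_le_of_le_half hC.le hα (hnonneg _ hpos)
            (apply_seq_succ_le_half hmono hnonneg hC hiter hS₀ hj)
      _ ≤ 2 ^ (-α) * ((2 ^ (-α)) ^ j * stepLength g C α S₀) := by gcongr
      _ = (2 ^ (-α)) ^ (j + 1) * stepLength g C α S₀ := by ring

lemma seq_le (hmono : ∀ s t, 0 < s → s ≤ t → g t ≤ g s)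
    (hnonneg : ∀ s, 0 < s → 0 ≤ g s) (hC : 0 < C) (hα : 0 < α)
    (hiter : ∀ s t, 0 < s → 0 ≤ t → t ≤ lam → t * g (t + s) ≤ C * g s ^ (1 + α))
    (hS₀ : 0 < S₀) (hlam : stepLength g C α S₀ ≤ lam) (j : ℕ) :
    seq g C α S₀ j ≤ S₀ + stepLength g C α S₀ / (1 - 2 ^ (-α)) := by
  have hsum : seq g C α S₀ j ≤ S₀ + (∑ i ∈ range j, (2 ^ (-α)) ^ i) * stepLength g C α S₀ := by
    induction j with
    | zero => simp [seq_zero]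
    | succ j ih =>
      rw [seq_succ, sum_range_succ, add_mul]
      linarith [stepLength_seq_le hmono hnonneg hC hα.le hiter hS₀ hlam j]
  have hgeom : ∑ i ∈ range j, ((2 : ℝ) ^ (-α)) ^ i ≤ 1 / (1 - 2 ^ (-α)) := by
    have := geom_sum_Ico_le_of_lt_one (m := 0) (n := j) (Real.rpow_nonneg zero_le_two (-α))
      (Real.rpow_lt_one_of_one_lt_of_neg one_lt_two (neg_neg_of_pos hα))
    rwa [← range_eq_Ico, pow_zero] at this
  have hL₀ : 0 ≤ stepLength g C α S₀ := stepLength_nonneg hC.le (hnonneg _ hS₀)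
  calc _ ≤ S₀ + (∑ i ∈ range j, (2 ^ (-α)) ^ i) * stepLength g C α S₀ := hsum
    _ ≤ S₀ + 1 / (1 - 2 ^ (-α)) * stepLength g C α S₀ := by gcongr
    _ = S₀ + stepLength g C α S₀ / (1 - 2 ^ (-α)) := by rw [one_div_mul_eq_div]

lemma apply_seq_le_half_pow (hmono : ∀ s t, 0 < s → s ≤ t → g t ≤ g s)
    (hnonneg : ∀ s, 0 < s → 0 ≤ g s) (hC : 0 < C) (hα : 0 ≤ α)
    (hiter : ∀ s t, 0 < s → 0 ≤ t → t ≤ lam → t * g (t + s) ≤ C * g s ^ (1 + α))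
    (hS₀ : 0 < S₀) (hlam : stepLength g C α S₀ ≤ lam) (j : ℕ) :
    g (seq g C α S₀ j) ≤ (1 / 2) ^ j * g S₀ := by
  refine le_geom (u := fun j ↦ g (seq g C α S₀ j)) one_half_pos.le j fun k _ ↦ ?_
  have hk : stepLength g C α (seq g C α S₀ k) ≤ lam :=
    calc _ ≤ (2 ^ (-α)) ^ k * stepLength g C α S₀ :=
          stepLength_seq_le hmono hnonneg hC hα hiter hS₀ hlam k
      _ ≤ stepLength g C α S₀ :=
          two_rpow_neg_pow_mul_le hα (stepLength_nonneg hC.le (hnonneg _ hS₀)) k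
      _ ≤ lam := hlam
  linarith [apply_seq_succ_le_half hmono hnonneg hC hiter hS₀ hk]

end DeGiorgi

open DeGiorgi in
theorem de_giorgi_iteration_general
    (g : ℝ → ℝ)
    (hmono : ∀ s t : ℝ, 0 < s → s ≤ t → g t ≤ g s)
    (hnonneg : ∀ s : ℝ, 0 < s → 0 ≤ g s)
    (C α lam : ℝ) (hC : 0 < C) (hα : 0 < α)
    (hiter : ∀ s t : ℝ, 0 < s → 0 ≤ t → t ≤ lam → t * g (t + s) ≤ C * g s ^ (1 + α))
    (S₀ t₀ : ℝ) (hS₀ : 0 < S₀) (ht₀lam : t₀ ≤ lam)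
    (hsmall : g S₀ ^ α < t₀ / (2 * C)) :
    ∀ S : ℝ, S₀ + t₀ / (1 - (2 : ℝ) ^ (-α)) ≤ S → g S = 0 := by
  intro S hS
  have hstep : stepLength g C α S₀ < t₀ := by
    rw [stepLength, mul_comm]
    exact (lt_div_iff₀ (by positivity)).mp hsmall
  have hlam : stepLength g C α S₀ ≤ lam := hstep.le.trans ht₀lam
  have hr : 0 < 1 - (2 : ℝ) ^ (-α) :=
    sub_pos.mpr (Real.rpow_lt_one_of_one_lt_of_neg one_lt_two (neg_neg_of_pos hα))
  have hseq_le (j : ℕ) : seq g C α S₀ j ≤ S :=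
    calc _ ≤ S₀ + stepLength g C α S₀ / (1 - 2 ^ (-α)) :=
          seq_le hmono hnonneg hC hα hiter hS₀ hlam j
      _ ≤ S := by linarith [div_le_div_of_nonneg_right hstep.le hr.le]
  have hg_le (j : ℕ) : g S ≤ (1 / 2) ^ j * g S₀ :=
    (hmono _ _ (hS₀.trans_le (le_seq hnonneg hC.le hS₀ j)) (hseq_le j)).trans
      (apply_seq_le_half_pow hmono hnonneg hC hα.le hiter hS₀ hlam j)
  have hlim : Tendsto (fun j : ℕ ↦ (1 / 2 : ℝ) ^ j * g S₀) atTop (nhds 0) := by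
    simpa using (tendsto_pow_atTop_nhds_zero_of_lt_one one_half_pos.le one_half_lt_one).mul_const
      (g S₀)
  exact le_antisymm (ge_of_tendsto' hlim hg_le)
    (hnonneg S (hS₀.trans_le (hseq_le 0)))

/-- De Giorgi iteration lemma (Lemma 3.2): if `g` is non-increasing, nonnegative and
right-continuous on `(0,∞)`, satisfies `t * g (t + s) ≤ C * g s ^ (1 + α)` for all `s > 0`
and `0 ≤ t ≤ λ`, and `g S₀ ^ α < t₀ / (2C)` for some `S₀ > 0` and `0 ≤ t₀ ≤ λ`,
then `g S = 0` for all `S ≥ S₀ + t₀ / (1 - 2 ^ (-α))`. -/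
theorem de_giorgi_iteration
    (g : ℝ → ℝ)
    (hmono : ∀ s t : ℝ, 0 < s → s ≤ t → g t ≤ g s)
    (hnonneg : ∀ s : ℝ, 0 < s → 0 ≤ g s)
    (hrc : ∀ s : ℝ, 0 < s → ContinuousWithinAt g (Set.Ioi s) s)
    (C α lam : ℝ) (hC : 0 < C) (hα : 0 < α) (hlam0 : 0 < lam) (hlam1 : lam ≤ 1)
    (hiter : ∀ s t : ℝ, 0 < s → 0 ≤ t → t ≤ lam → t * g (t + s) ≤ C * g s ^ (1 + α))
    (S₀ t₀ : ℝ) (hS₀ : 0 < S₀) (ht₀0 : 0 ≤ t₀) (ht₀lam : t₀ ≤ lam)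
    (hsmall : g S₀ ^ α < t₀ / (2 * C)) :
    ∀ S : ℝ, S₀ + t₀ / (1 - (2 : ℝ) ^ (-α)) ≤ S → g S = 0 :=
  de_giorgi_iteration_general g hmono hnonneg C α lam hC hα hiter S₀ t₀ hS₀ ht₀lam hsmall
end

section
/- Let g : (0,∞) → [0,∞) be a non-increasing, right-continuous function, and let C > 0, α ≥ 1, λ ∈ (0,1/2) and M ≥ 1 be constants. Assume that t·g(t+s) ≤ C·g(s)^{1+α} for every s > 0 and every t with 0 < t < λ, and that g(s) = 0 for every s ≥ M. Then for every ε > 0 one has g(s) = 0 for all s ≥ ε + (2MC/λ)·g(ε)^α. -/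
/-!
If `A = g(ε)^α` satisfies `2 C A < λ`, run a De Giorgi iteration from `s_0 = ε` with steps
`s_{n+1} = s_n + 2 C A 2^{-n}`. As long as `g(s_n) ≤ g(ε) 2^{-n}`, the bound `α ≥ 1` gives
`g(s_n)^α ≤ A 2^{-n}`, and the iteration inequality with `t = 2 C A 2^{-n}` halves `g` once more.
The points `s_n` increase to `ε + 4 C A ≤ ε + (2MC/λ) A` (as `2λ < 1 ≤ M`), so `g` vanishes
beyond that point by monotonicity. If instead `2 C A ≥ λ`, the threshold already exceeds `M`.
-/

open Filter Topology

section DeGiorgi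

variable {g : ℝ → ℝ} {C α lam : ℝ}

theorem iter_step_le_half (hC : 0 < C) (hα : 0 ≤ α)
    (hiter : ∀ s t : ℝ, 0 < s → 0 < t → t < lam → t * g (t + s) ≤ C * g s ^ (1 + α))
    {s a : ℝ} (hs : 0 < s) (hgs : 0 ≤ g s) (ha : 0 < a) (hga : g s ^ α ≤ a)
    (hlam : 2 * C * a < lam) :
    g (2 * C * a + s) ≤ g s / 2 := by
  have ht : 0 < 2 * C * a := by positivity
  refine le_of_mul_le_mul_left ?_ ht
  calc 2 * C * a * g (2 * C * a + s) ≤ C * g s ^ (1 + α) := hiter s _ hs ht hlam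
    _ = C * (g s * g s ^ α) := by rw [Real.rpow_one_add' hgs (by linarith)]
    _ ≤ C * (g s * a) := by gcongr
    _ = 2 * C * a * (g s / 2) := by ring

theorem iterate_le_geometric (hC : 0 < C) (hα : 1 ≤ α)
    (hnonneg : ∀ s : ℝ, 0 < s → 0 ≤ g s)
    (hiter : ∀ s t : ℝ, 0 < s → 0 < t → t < lam → t * g (t + s) ≤ C * g s ^ (1 + α))
    {ε : ℝ} (hε : 0 < ε) (hgε : 0 < g ε) (hlam : 2 * C * g ε ^ α < lam) (n : ℕ) :
    g (ε + 4 * C * g ε ^ α * (1 - (1 / 2) ^ n)) ≤ g ε * (1 / 2) ^ n := by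
  set A := g ε ^ α
  have hA : 0 < A := Real.rpow_pos_of_pos hgε α
  induction n with
  | zero => simp
  | succ n ih =>
    set sn := ε + 4 * C * A * (1 - (1 / 2) ^ n)
    have hhalf_le : ((1 : ℝ) / 2) ^ n ≤ 1 := pow_le_one₀ (by norm_num) (by norm_num)
    have hsn : 0 < sn :=
      add_pos_of_pos_of_nonneg hε (mul_nonneg (by positivity) (sub_nonneg.2 hhalf_le))
    have hpow : g sn ^ α ≤ A * (1 / 2) ^ n :=
      calc g sn ^ α ≤ (g ε * (1 / 2) ^ n) ^ α :=
            Real.rpow_le_rpow (hnonneg sn hsn) ih (by linarith)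
        _ = A * ((1 / 2) ^ n) ^ α := Real.mul_rpow hgε.le (by positivity)
        _ ≤ A * (1 / 2) ^ n := by
            gcongr; exact Real.rpow_le_self_of_le_one (by positivity) hhalf_le hα
    have hstep_lt : 2 * C * (A * (1 / 2) ^ n) < lam := by
      have : 2 * C * (A * (1 / 2) ^ n) ≤ 2 * C * A := by
        rw [← mul_assoc]; exact mul_le_of_le_one_right (by positivity) hhalf_le
      linarith
    have hnext : ε + 4 * C * A * (1 - (1 / 2) ^ (n + 1)) = 2 * C * (A * (1 / 2) ^ n) + sn := by
      rw [pow_succ]; ring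
    calc g (ε + 4 * C * A * (1 - (1 / 2) ^ (n + 1))) ≤ g sn / 2 := by
          rw [hnext]
          exact iter_step_le_half hC (by linarith) hiter hsn (hnonneg sn hsn) (by positivity)
            hpow hstep_lt
      _ ≤ g ε * (1 / 2) ^ n / 2 := by gcongr
      _ = g ε * (1 / 2) ^ (n + 1) := by rw [pow_succ]; ring

theorem eq_zero_of_iterate (hC : 0 < C) (hα : 1 ≤ α)
    (hmono : ∀ s t : ℝ, 0 < s → s ≤ t → g t ≤ g s)
    (hnonneg : ∀ s : ℝ, 0 < s → 0 ≤ g s)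
    (hiter : ∀ s t : ℝ, 0 < s → 0 < t → t < lam → t * g (t + s) ≤ C * g s ^ (1 + α))
    {ε : ℝ} (hε : 0 < ε) (hgε : 0 < g ε) (hlam : 2 * C * g ε ^ α < lam)
    {s : ℝ} (hs : ε + 4 * C * g ε ^ α ≤ s) :
    g s = 0 := by
  have hCA : 0 ≤ 4 * C * g ε ^ α := by positivity
  have hle : ∀ n : ℕ, g s ≤ g ε * (1 / 2) ^ n := fun n ↦ by
    have hhalf_le : ((1 : ℝ) / 2) ^ n ≤ 1 := pow_le_one₀ (by norm_num) (by norm_num)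
    have hsn : 0 < ε + 4 * C * g ε ^ α * (1 - (1 / 2) ^ n) :=
      add_pos_of_pos_of_nonneg hε (mul_nonneg hCA (sub_nonneg.2 hhalf_le))
    have hsn_le : ε + 4 * C * g ε ^ α * (1 - (1 / 2) ^ n) ≤ s := by
      have : 4 * C * g ε ^ α * (1 - (1 / 2) ^ n) ≤ 4 * C * g ε ^ α :=
        mul_le_of_le_one_right hCA (by linarith [pow_nonneg (by norm_num : (0 : ℝ) ≤ 1 / 2) n])
      linarith
    exact (hmono _ s hsn hsn_le).trans
      (iterate_le_geometric hC hα hnonneg hiter hε hgε hlam n)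
  have hlim : Tendsto (fun n : ℕ ↦ g ε * (1 / 2 : ℝ) ^ n) atTop (𝓝 0) := by
    simpa using (tendsto_pow_atTop_nhds_zero_of_lt_one (by norm_num : (0 : ℝ) ≤ 1 / 2)
      (by norm_num)).const_mul (g ε)
  exact le_antisymm (ge_of_tendsto' hlim hle) (hnonneg s (by linarith))

end DeGiorgi

theorem iteration_bound_general
    (g : ℝ → ℝ)
    (hmono : ∀ s t : ℝ, 0 < s → s ≤ t → g t ≤ g s)
    (hnonneg : ∀ s : ℝ, 0 < s → 0 ≤ g s)
    (C α lam M : ℝ) (hC : 0 < C) (hα : 1 ≤ α) (hlam0 : 0 < lam) (hlam1 : lam < 1 / 2)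
    (hM : 1 ≤ M)
    (hiter : ∀ s t : ℝ, 0 < s → 0 < t → t < lam → t * g (t + s) ≤ C * g s ^ (1 + α))
    (hzero : ∀ s : ℝ, M ≤ s → g s = 0) :
    ∀ ε : ℝ, 0 < ε → ∀ s : ℝ, ε + (2 * M * C / lam) * g ε ^ α ≤ s → g s = 0 := by
  intro ε hε s hs
  have hA : 0 ≤ g ε ^ α := Real.rpow_nonneg (hnonneg ε hε) α
  have hthreshold : 2 * C * g ε ^ α * (M / lam) = (2 * M * C / lam) * g ε ^ α := by ring
  rcases (hnonneg ε hε).eq_or_lt with hgε | hgε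
  · rw [← hgε, Real.zero_rpow (by linarith), mul_zero, add_zero] at hs
    exact le_antisymm (hgε ▸ hmono ε s hε hs) (hnonneg s (hε.trans_le hs))
  by_cases hlam : lam ≤ 2 * C * g ε ^ α
  · refine hzero s (le_trans ?_ hs)
    have : M ≤ 2 * C * g ε ^ α * (M / lam) := by
      rw [mul_div_assoc']; exact (le_div_iff₀ hlam0).2 (by nlinarith)
    linarith
  · refine eq_zero_of_iterate hC hα hmono hnonneg hiter hε hgε (not_le.1 hlam) (le_trans ?_ hs)
    have : 2 * (2 * C * g ε ^ α) ≤ 2 * C * g ε ^ α * (M / lam) := by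
      rw [mul_comm 2]; gcongr; exact (le_div_iff₀ hlam0).2 (by linarith)
    linarith

/-- Quantitative iteration bound underlying Lemma 3.4: if `g` is non-increasing, nonnegative
and right-continuous on `(0,∞)`, satisfies `t * g (t + s) ≤ C * g s ^ (1 + α)` for all
`s > 0` and `0 < t < λ` (with `α ≥ 1`, `λ ∈ (0,1/2)`), and `g s = 0` for `s ≥ M` with
`M ≥ 1`, then for every `ε > 0` one has `g s = 0` for all `s ≥ ε + (2MC/λ) * g ε ^ α`. -/
theorem iteration_bound
    (g : ℝ → ℝ)
    (hmono : ∀ s t : ℝ, 0 < s → s ≤ t → g t ≤ g s)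
    (hnonneg : ∀ s : ℝ, 0 < s → 0 ≤ g s)
    (hrc : ∀ s : ℝ, 0 < s → ContinuousWithinAt g (Set.Ioi s) s)
    (C α lam M : ℝ) (hC : 0 < C) (hα : 1 ≤ α) (hlam0 : 0 < lam) (hlam1 : lam < 1 / 2)
    (hM : 1 ≤ M)
    (hiter : ∀ s t : ℝ, 0 < s → 0 < t → t < lam → t * g (t + s) ≤ C * g s ^ (1 + α))
    (hzero : ∀ s : ℝ, M ≤ s → g s = 0) :
    ∀ ε : ℝ, 0 < ε → ∀ s : ℝ, ε + (2 * M * C / lam) * g ε ^ α ≤ s → g s = 0 :=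
  iteration_bound_general g hmono hnonneg C α lam M hC hα hlam0 hlam1 hM hiter hzero
end

section
/- Let g : (0,∞) → [0,∞) be a non-increasing, right-continuous function, let n ≥ 1 be an integer, and let C > 0, α ≥ 1, λ ∈ (0,1/2), M ≥ 1 and L > 0 be constants. Assume that: (i) t·g(t+s) ≤ C·g(s)^{1+α} for every s > 0 and every t with 0 < t < λ; (ii) g(s) = 0 for every s ≥ M; and (iii) g(2ε)^n ≤ L·ε^{−(n+1)} for every ε > 0. Then g(s) = 0 for all s ≥ (2 + 2MC/λ)·L^{α/((n+1)α+n)}. -/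
/-- Quantitative core of Lemma 3.5: under the iteration hypothesis, vanishing beyond `M`,
and the decay `g (2ε) ^ n ≤ L * ε ^ (-(n+1))` for every `ε > 0`, one gets `g s = 0` for all
`s ≥ (2 + 2MC/λ) * L ^ (α / ((n+1)α + n))`. -/
theorem iteration_bound_optimized
    (g : ℝ → ℝ) (n : ℕ) (hn : 1 ≤ n)
    (hmono : ∀ s t : ℝ, 0 < s → s ≤ t → g t ≤ g s)
    (hnonneg : ∀ s : ℝ, 0 < s → 0 ≤ g s)
    (hrc : ∀ s : ℝ, 0 < s → ContinuousWithinAt g (Set.Ioi s) s)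
    (C α lam M L : ℝ) (hC : 0 < C) (hα : 1 ≤ α) (hlam0 : 0 < lam) (hlam1 : lam < 1 / 2)
    (hM : 1 ≤ M) (hL : 0 < L)
    (hiter : ∀ s t : ℝ, 0 < s → 0 < t → t < lam → t * g (t + s) ≤ C * g s ^ (1 + α))
    (hzero : ∀ s : ℝ, M ≤ s → g s = 0)
    (hdecay : ∀ ε : ℝ, 0 < ε → g (2 * ε) ^ n ≤ L * ε ^ (-((n : ℝ) + 1))) :
    ∀ s : ℝ, (2 + 2 * M * C / lam) * L ^ (α / (((n : ℝ) + 1) * α + n)) ≤ s → g s = 0 := by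
  intro s hs
  have hα0 : (0:ℝ) < α := lt_of_lt_of_le one_pos hα
  set D : ℝ := ((n : ℝ) + 1) * α + n with hD
  have hDpos : 0 < D := by positivity
  set β : ℝ := α / D with hβ
  set ε : ℝ := L ^ β with hε
  have hεpos : 0 < ε := Real.rpow_pos_of_pos hL β
  -- s is at least 2ε
  have hs2ε : 2 * ε ≤ s := by
    have h0 : 0 ≤ 2 * M * C / lam * ε := by positivity
    have he : (2 + 2 * M * C / lam) * ε = 2 * ε + 2 * M * C / lam * ε := by ring
    linarith
  have hspos : 0 < s := lt_of_lt_of_le (by positivity) hs2ε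
  -- key: g (2ε) ^ α ≤ ε
  have hg0nn : 0 ≤ g (2 * ε) := hnonneg _ (by positivity)
  have hkey : g (2 * ε) ^ α ≤ ε := by
    have h1 : g (2 * ε) ^ n ≤ L * ε ^ (-((n : ℝ) + 1)) := hdecay ε hεpos
    have h2 : L * ε ^ (-((n : ℝ) + 1)) = (ε ^ (1/α)) ^ n := by
      have e1 : L * ε ^ (-((n:ℝ)+1)) = L ^ (1 + β * (-((n:ℝ)+1))) := by
        rw [hε, ← Real.rpow_mul hL.le, Real.rpow_add hL, Real.rpow_one]
      have e2 : (ε ^ (1/α)) ^ n = L ^ (β * (1/α) * (n:ℝ)) := by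
        rw [hε, ← Real.rpow_natCast ((L ^ β) ^ (1/α)) n,
          ← Real.rpow_mul (Real.rpow_nonneg hL.le β), ← Real.rpow_mul hL.le]
        ring_nf
      rw [e1, e2]
      congr 1
      rw [hβ]
      field_simp
      ring
    have h3 : g (2 * ε) ≤ ε ^ (1/α) := by
      have := h1.trans_eq h2
      exact (pow_le_pow_iff_left₀ hg0nn (Real.rpow_nonneg hεpos.le _)
        (by omega)).mp this
    calc g (2 * ε) ^ α ≤ (ε ^ (1/α)) ^ α :=
          Real.rpow_le_rpow hg0nn h3 hα0.le
      _ = ε := by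
          rw [← Real.rpow_mul hεpos.le, one_div_mul_cancel hα0.ne', Real.rpow_one]
  -- Case 1: lam ≤ 2 C ε : then s ≥ M
  by_cases hcase : lam ≤ 2 * C * ε
  · apply hzero
    have h1 : M ≤ 2 * M * C / lam * ε := by
      rw [div_mul_eq_mul_div, le_div_iff₀ hlam0]
      have : M * lam ≤ M * (2 * C * ε) := mul_le_mul_of_nonneg_left hcase (by linarith)
      have hh : M * (2 * C * ε) ≤ 2 * M * C * ε := by ring_nf; linarith
      linarith
    have he : (2 + 2 * M * C / lam) * ε = 2 * ε + 2 * M * C / lam * ε := by ring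
    linarith
  push_neg at hcase
  -- Case 2: 2 C ε < lam
  rcases eq_or_lt_of_le hg0nn with hg0 | hg0pos
  · have := hmono (2*ε) s (by positivity) hs2ε
    have := hnonneg s hspos
    linarith [hg0]
  set g0 : ℝ := g (2 * ε) with hg0def
  set A : ℝ := 4 * C * g0 ^ α with hA
  have hg0αpos : 0 < g0 ^ α := Real.rpow_pos_of_pos hg0pos α
  have hApos : 0 < A := by positivity
  -- iteration
  have main : ∀ k : ℕ, g (2 * ε + A * (1 - (1/2:ℝ)^k)) ≤ g0 * (1/2:ℝ)^k := by
    intro k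
    induction k with
    | zero => simp [hg0def]
    | succ k ih =>
      set q : ℝ := (1/2:ℝ)^k with hq
      have hq0 : 0 < q := by positivity
      have hq1 : q ≤ 1 := pow_le_one₀ (by norm_num) (by norm_num)
      set sk : ℝ := 2 * ε + A * (1 - q) with hsk
      set t : ℝ := (A/2) * q with ht
      have h1q : 0 ≤ 1 - q := by linarith
      have hskpos : 0 < sk := by
        have : 0 ≤ A * (1 - q) := mul_nonneg hApos.le h1q
        rw [hsk]; linarith
      have htpos : 0 < t := by positivity
      have htlam : t < lam := by
        have ht1 : t ≤ A/2 := by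
          have := mul_le_of_le_one_right (by positivity : (0:ℝ) ≤ A/2) hq1
          rw [ht]; linarith
        have ht2 : A/2 = 2*C*g0^α := by rw [hA]; ring
        have ht3 : 2*C*g0^α ≤ 2*C*ε :=
          mul_le_mul_of_nonneg_left hkey (by positivity)
        linarith
      have hit := hiter sk t hskpos htpos htlam
      have hgsknn : 0 ≤ g sk := hnonneg sk hskpos
      have hstep : C * g sk ^ (1 + α) ≤ t * (g0 * q / 2) := by
        have h1 : g sk ^ (1 + α) ≤ (g0 * q) ^ (1 + α) :=
          Real.rpow_le_rpow hgsknn ih (by linarith)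
        have h2 : (g0 * q) ^ (1 + α) = (g0 ^ (1+α)) * q ^ (1+α) :=
          Real.mul_rpow hg0pos.le hq0.le
        have h3 : q ^ (1+α) ≤ q ^ (2:ℝ) :=
          Real.rpow_le_rpow_of_exponent_ge hq0 hq1 (by linarith)
        have h4 : g0 ^ (1+α) = g0 * g0 ^ α := by
          rw [Real.rpow_add hg0pos, Real.rpow_one]
        have h5 : q ^ (2:ℝ) = q * q := by
          rw [show (2:ℝ) = ((2:ℕ):ℝ) by norm_num, Real.rpow_natCast]; ring
        have h6 : t * (g0 * q / 2) = C * (g0 * g0 ^ α) * (q * q) := by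
          rw [ht, hA]; ring
        have hgnn : 0 ≤ g0 ^ (1+α) := Real.rpow_nonneg hg0pos.le _
        calc C * g sk ^ (1+α) ≤ C * ((g0 ^ (1+α)) * q ^ (1+α)) := by
              rw [← h2]; exact mul_le_mul_of_nonneg_left h1 hC.le
          _ ≤ C * ((g0 ^ (1+α)) * q ^ (2:ℝ)) := by
              apply mul_le_mul_of_nonneg_left _ hC.le
              exact mul_le_mul_of_nonneg_left h3 hgnn
          _ = t * (g0 * q / 2) := by rw [h5, h6, h4]; ring
      have hfin : t * g (t + sk) ≤ t * (g0 * q / 2) := hit.trans hstep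
      have h7 : g (t + sk) ≤ g0 * q / 2 := le_of_mul_le_mul_left hfin htpos
      have harg : 2 * ε + A * (1 - (1/2:ℝ)^(k+1)) = t + sk := by
        rw [ht, hsk, hq, pow_succ]; ring
      rw [harg]
      calc g (t + sk) ≤ g0 * q / 2 := h7
        _ = g0 * (1/2:ℝ)^(k+1) := by rw [hq, pow_succ]; ring
  -- conclude: g s ≤ g0 * (1/2)^k for all k
  have hsbig : ∀ k : ℕ, 2 * ε + A * (1 - (1/2:ℝ)^k) ≤ s := by
    intro k
    have hq0 : (0:ℝ) < (1/2:ℝ)^k := by positivity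
    have hq1 : (1/2:ℝ)^k ≤ 1 := pow_le_one₀ (by norm_num) (by norm_num)
    have h1 : A * (1 - (1/2:ℝ)^k) ≤ A := by
      have := mul_le_mul_of_nonneg_left (by linarith : (1:ℝ) - (1/2:ℝ)^k ≤ 1) hApos.le
      linarith
    have h2 : A ≤ 2 * M * C / lam * ε := by
      have hA4 : A ≤ 4 * C * ε := by
        rw [hA]
        exact mul_le_mul_of_nonneg_left hkey (by positivity)
      have hMlam : 2 * lam ≤ M := by linarith
      have h6 : (4:ℝ) ≤ 2 * M / lam := by
        rw [le_div_iff₀ hlam0]; linarith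
      have h7 : 4 * C * ε ≤ 2 * M / lam * C * ε := by
        have := mul_le_mul_of_nonneg_right
          (mul_le_mul_of_nonneg_right h6 hC.le) hεpos.le
        linarith
      have h8 : 2 * M / lam * C * ε = 2 * M * C / lam * ε := by ring
      linarith
    have h4 : (2 + 2 * M * C / lam) * ε ≤ s := hs
    have he : (2 + 2 * M * C / lam) * ε = 2 * ε + 2 * M * C / lam * ε := by ring
    linarith
  have hgs : ∀ k : ℕ, g s ≤ g0 * (1/2:ℝ)^k := by
    intro k
    have h1 := hmono _ s (by
      have hq1 : (1/2:ℝ)^k ≤ 1 := pow_le_one₀ (by norm_num) (by norm_num)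
      have h0 : 0 ≤ A * (1 - (1/2:ℝ)^k) := mul_nonneg hApos.le (by linarith)
      linarith) (hsbig k)
    exact h1.trans (main k)
  have htend : Filter.Tendsto (fun k : ℕ => g0 * (1/2:ℝ)^k) Filter.atTop (nhds 0) := by
    have := tendsto_pow_atTop_nhds_zero_of_lt_one (by norm_num : (0:ℝ) ≤ 1/2)
      (by norm_num : (1/2:ℝ) < 1)
    simpa using this.const_mul g0
  have hle : g s ≤ 0 := ge_of_tendsto' htend hgs
  exact le_antisymm hle (hnonneg s hspos)
end

section
/- Let X be a measurable space, let μ and V be finite measures on X, let w : X → ℝ be a measurable function, and let m > 0, C₀ > 0, C₁ > 0 and 0 < β ≤ 1 be constants. For M > 0 write w_M := max(w, −M). Assume that: (i) ∫_X e^{−m·w} dV ≤ C₀; and (ii) for every M > 0, ∫_X (w_M − w) dμ ≤ C₁ · max{ ∫_X (w_M − w) dV , (∫_X (w_M − w) dV)^β }. Then for every γ with 0 < γ < β one has ∫_X e^{−γ m w} dμ ≤ μ(X) + C₂·γ·e^{βm}/(β − γ), where C₂ := C₁ · max{ C₀/m , (C₀/m)^β }. In particular e^{−γ m w} is μ-integrable.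 -/
open MeasureTheory Set Filter
open scoped ENNReal

lemma lint_exp_aux {a : ℝ} (ha : 0 < a) :
    ∫⁻ s in Ioi (0:ℝ), ENNReal.ofReal (Real.exp (-(a*s))) = ENNReal.ofReal (1/a) := by
  have hint : IntegrableOn (fun s : ℝ => Real.exp (-(a*s))) (Ioi 0) := by
    simpa [neg_mul] using exp_neg_integrableOn_Ioi 0 ha
  rw [← ofReal_integral_eq_lintegral_ofReal hint
      (Eventually.of_forall fun s => (Real.exp_pos _).le)]
  congr 1
  have hderiv : ∀ x ∈ Ici (0:ℝ),
      HasDerivAt (fun s => -Real.exp (-(a*s))/a) (Real.exp (-(a*x))) x := by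
    intro x _
    have h1 : HasDerivAt (fun s : ℝ => -(a*s)) (-a) x := by
      have h := ((hasDerivAt_id x).const_mul a).neg
      rw [mul_one] at h
      exact h
    have h2 := (h1.exp.neg).div_const a
    refine h2.congr_deriv ?_
    rw [div_eq_iff (ne_of_gt ha)]; ring
  have htend : Tendsto (fun s : ℝ => -Real.exp (-(a*s))/a) atTop (nhds 0) := by
    have h1 : Tendsto (fun s : ℝ => -(a*s)) atTop atBot := by
      simpa [neg_mul] using tendsto_id.const_mul_atTop_of_neg (neg_neg_iff_pos.2 ha)
    have h2 : Tendsto (fun s : ℝ => Real.exp (-(a*s))) atTop (nhds 0) :=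
      Real.tendsto_exp_atBot.comp h1
    simpa using (h2.neg).div_const a
  rw [integral_Ioi_of_hasDerivAt_of_tendsto' hderiv hint htend]
  simp [ne_of_gt ha, neg_div, neg_neg, one_div]

lemma trans_aux (T : ℝ → ℝ≥0∞) (s : ℝ) :
    ∫⁻ u in Ioi s, T u = ∫⁻ t in Ioi (0:ℝ), T (s + t) := by
  rw [← lintegral_indicator measurableSet_Ioi _, ← lintegral_indicator measurableSet_Ioi _,
    ← lintegral_add_right_eq_self (fun u => (Ioi s).indicator T u) s]
  congr 1; funext t
  by_cases ht : 0 < t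
  · rw [indicator_of_mem (by simpa using ht : t + s ∈ Ioi s),
      indicator_of_mem (mem_Ioi.2 ht)]
    rw [add_comm]
  · rw [indicator_of_notMem (by simpa using ht),
      indicator_of_notMem (by simpa using ht)]

set_option maxHeartbeats 1000000 in
/-- Measure-theoretic content of Proposition 2.7: exponential integrability. Given
`∫ e^{-m w} dV ≤ C₀` and the Hölder-type bound (ii) on `∫ (w_M - w) dμ` for every `M > 0`,
one has `∫ e^{-γ m w} dμ ≤ μ(X) + C₂ γ e^{βm}/(β - γ)` for every `0 < γ < β`, where
`C₂ = C₁ * max (C₀/m) ((C₀/m)^β)`; in particular `e^{-γ m w}` is `μ`-integrable. -/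
theorem exp_integrability
    {X : Type*} [MeasurableSpace X] (μ V : Measure X)
    [IsFiniteMeasure μ] [IsFiniteMeasure V]
    (w : X → ℝ) (hw : Measurable w)
    (m C₀ C₁ β : ℝ) (hm : 0 < m) (hC₀ : 0 < C₀) (hC₁ : 0 < C₁)
    (hβ0 : 0 < β) (hβ1 : β ≤ 1)
    (hi : ∫⁻ x, ENNReal.ofReal (Real.exp (-m * w x)) ∂V ≤ ENNReal.ofReal C₀)
    (hii : ∀ M : ℝ, 0 < M →
      ∫⁻ x, ENNReal.ofReal (max (w x) (-M) - w x) ∂μ ≤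
        ENNReal.ofReal C₁ *
          max (∫⁻ x, ENNReal.ofReal (max (w x) (-M) - w x) ∂V)
            ((∫⁻ x, ENNReal.ofReal (max (w x) (-M) - w x) ∂V) ^ (β : ℝ))) :
    ∀ γ : ℝ, 0 < γ → γ < β →
      (∫⁻ x, ENNReal.ofReal (Real.exp (-γ * m * w x)) ∂μ ≤
        μ Set.univ +
          ENNReal.ofReal (C₁ * max (C₀ / m) ((C₀ / m) ^ β) * γ * Real.exp (β * m) / (β - γ)))
      ∧ Integrable (fun x => Real.exp (-γ * m * w x)) μ := by
  intro γ hγ0 hγβ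
  set K : ℝ := max (C₀ / m) ((C₀ / m) ^ β) with hKdef
  have hCm : 0 < C₀ / m := div_pos hC₀ hm
  have hK : 0 < K := lt_of_lt_of_le hCm (le_max_left _ _)
  -- Chebyshev for V
  have hTV : ∀ s : ℝ, V {x | w x ≤ -s} ≤ ENNReal.ofReal (C₀ * Real.exp (-(m*s))) := by
    intro s
    have hmble : AEMeasurable (fun x => ENNReal.ofReal (Real.exp (-m * w x))) V :=
      ((hw.const_mul (-m)).exp.ennreal_ofReal).aemeasurable
    have h1 : ENNReal.ofReal (Real.exp (m*s)) * V {x | w x ≤ -s} ≤ ENNReal.ofReal C₀ := by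
      refine le_trans ?_ (le_trans (mul_meas_ge_le_lintegral₀ hmble
        (ENNReal.ofReal (Real.exp (m*s)))) hi)
      refine mul_le_mul_right (measure_mono ?_) _
      intro x hx
      have : w x ≤ -s := hx
      exact ENNReal.ofReal_le_ofReal (Real.exp_le_exp.2 (by nlinarith))
    have h2 : V {x | w x ≤ -s} ≤ ENNReal.ofReal C₀ / ENNReal.ofReal (Real.exp (m*s)) := by
      rw [ENNReal.le_div_iff_mul_le (Or.inl (by simp [Real.exp_pos])) (Or.inl ENNReal.ofReal_ne_top)]
      rwa [mul_comm]
    refine h2.trans (le_of_eq ?_)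
    rw [← ENNReal.ofReal_div_of_pos (Real.exp_pos _)]
    congr 1
    rw [Real.exp_neg]
    ring
  -- set identity
  have hsetM : ∀ (M t : ℝ), 0 < t →
      {a : X | t ≤ max (w a) (-M) - w a} = {a : X | w a ≤ -(M+t)} := by
    intro M t ht
    ext a
    simp only [mem_setOf_eq]
    constructor
    · intro h
      rcases le_or_gt (-M) (w a) with h' | h'
      · rw [max_eq_left h'] at h; linarith
      · rw [max_eq_right h'.le] at h; linarith
    · intro h
      have h' : w a ≤ -M := by linarith
      rw [max_eq_right h']; linarith
  -- layer cake for the truncations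
  have hlayer : ∀ (ν : Measure X) (M : ℝ),
      ∫⁻ x, ENNReal.ofReal (max (w x) (-M) - w x) ∂ν
        = ∫⁻ t in Ioi (0:ℝ), ν {a | w a ≤ -(M+t)} := by
    intro ν M
    rw [lintegral_eq_lintegral_meas_le ν
      (Eventually.of_forall fun x => sub_nonneg.2 (le_max_left _ _))
      ((hw.max measurable_const).sub hw).aemeasurable]
    refine setLIntegral_congr_fun measurableSet_Ioi (fun t ht => ?_)
    rw [hsetM M t ht]
  -- bound on ∫ (w_M - w) dV
  have hAV : ∀ M : ℝ, ∫⁻ x, ENNReal.ofReal (max (w x) (-M) - w x) ∂V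
      ≤ ENNReal.ofReal (C₀ / m * Real.exp (-(m*M))) := by
    intro M
    rw [hlayer V M]
    calc ∫⁻ t in Ioi (0:ℝ), V {a | w a ≤ -(M+t)}
        ≤ ∫⁻ t in Ioi (0:ℝ), ENNReal.ofReal (C₀ * Real.exp (-(m*M))) *
            ENNReal.ofReal (Real.exp (-(m*t))) := by
          refine lintegral_mono fun t => ?_
          refine (hTV (M+t)).trans (le_of_eq ?_)
          rw [← ENNReal.ofReal_mul (by positivity)]
          congr 1
          rw [mul_assoc, ← Real.exp_add]
          ring_nf
      _ = ENNReal.ofReal (C₀ * Real.exp (-(m*M))) *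
            ∫⁻ t in Ioi (0:ℝ), ENNReal.ofReal (Real.exp (-(m*t))) := by
          rw [lintegral_const_mul _ (by fun_prop : Measurable fun t : ℝ => ENNReal.ofReal (Real.exp (-(m*t))))]
      _ = ENNReal.ofReal (C₀ / m * Real.exp (-(m*M))) := by
          rw [lint_exp_aux hm, ← ENNReal.ofReal_mul (by positivity)]
          congr 1
          ring
  -- tail function
  obtain ⟨T, hTdef⟩ : ∃ T : ℝ → ℝ≥0∞, T = fun u => μ {a | w a ≤ -u} := ⟨_, rfl⟩
  have hTanti : Antitone T := by
    intro u v huv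
    rw [hTdef]
    exact measure_mono fun a ha => le_trans ha (neg_le_neg huv)
  have hTmeas : Measurable T := hTanti.measurable
  -- main tail bound
  have hG : ∀ s : ℝ, 0 < s →
      ∫⁻ u in Ioi s, T u ≤ ENNReal.ofReal (C₁ * K * Real.exp (-(β*(m*s)))) := by
    intro s hs
    rw [trans_aux T s]
    have h1 : ∫⁻ t in Ioi (0:ℝ), T (s + t)
        = ∫⁻ x, ENNReal.ofReal (max (w x) (-s) - w x) ∂μ := by
      rw [hlayer μ s, hTdef]
    rw [h1]
    refine (hii s hs).trans ?_
    set A := ∫⁻ x, ENNReal.ofReal (max (w x) (-s) - w x) ∂V with hA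
    have hE : (0:ℝ) < Real.exp (-(β*(m*s))) := Real.exp_pos _
    have hbound1 : A ≤ ENNReal.ofReal (C₀/m * Real.exp (-(β*(m*s)))) := by
      refine (hAV s).trans (ENNReal.ofReal_le_ofReal ?_)
      have h3 : Real.exp (-(m*s)) ≤ Real.exp (-(β*(m*s))) :=
        Real.exp_le_exp.2 (by nlinarith [mul_nonneg (sub_nonneg.2 hβ1) (mul_pos hm hs).le])
      exact mul_le_mul_of_nonneg_left h3 hCm.le
    have hbound2 : A ^ (β:ℝ) ≤ ENNReal.ofReal ((C₀/m)^β * Real.exp (-(β*(m*s)))) := by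
      have h2 : A ^ (β:ℝ) ≤ (ENNReal.ofReal (C₀/m * Real.exp (-(m*s)))) ^ (β:ℝ) :=
        ENNReal.rpow_le_rpow (hAV s) hβ0.le
      refine h2.trans (le_of_eq ?_)
      rw [ENNReal.ofReal_rpow_of_pos (by positivity)]
      congr 1
      rw [Real.mul_rpow (by positivity) (by positivity), ← Real.exp_mul]
      ring_nf
    have hmax : max A (A ^ (β:ℝ)) ≤ ENNReal.ofReal (K * Real.exp (-(β*(m*s)))) := by
      refine max_le (hbound1.trans (ENNReal.ofReal_le_ofReal ?_))
        (hbound2.trans (ENNReal.ofReal_le_ofReal ?_))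
      · exact mul_le_mul_of_nonneg_right (le_max_left _ _) hE.le
      · exact mul_le_mul_of_nonneg_right (le_max_right _ _) hE.le
    calc ENNReal.ofReal C₁ * max A (A ^ (β:ℝ))
        ≤ ENNReal.ofReal C₁ * ENNReal.ofReal (K * Real.exp (-(β*(m*s)))) :=
          mul_le_mul_right hmax _
      _ = ENNReal.ofReal (C₁ * K * Real.exp (-(β*(m*s)))) := by
          rw [← ENNReal.ofReal_mul hC₁.le]; ring_nf
  -- bound near zero
  have hG0 : ∫⁻ u in Ioi (0:ℝ), T u ≤ ENNReal.ofReal (C₁ * K) := by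
    have key : ∀ n : ℕ, ∫⁻ u in Ioi (1/(n+1) : ℝ), T u ≤ ENNReal.ofReal (C₁ * K) := by
      intro n
      refine (hG _ (by positivity)).trans (ENNReal.ofReal_le_ofReal ?_)
      have h1 : Real.exp (-(β*(m*(1/(n+1):ℝ)))) ≤ 1 := by
        rw [Real.exp_le_one_iff]
        have h2 : (0:ℝ) < 1/(n+1:ℝ) := by positivity
        nlinarith [mul_pos hβ0 (mul_pos hm h2)]
      nlinarith [mul_nonneg (mul_pos hC₁ hK).le (sub_nonneg.2 h1)]
    rw [← lintegral_indicator measurableSet_Ioi _]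
    have hpt : (fun u => (Ioi (0:ℝ)).indicator T u)
        = fun u => ⨆ n : ℕ, (Ioi (1/(n+1):ℝ)).indicator T u := by
      funext u
      rcases le_or_gt u 0 with hu | hu
      · rw [indicator_of_notMem (by simpa using not_lt.2 hu)]
        symm
        simp only [ENNReal.iSup_eq_zero]
        intro n
        exact indicator_of_notMem (by simp only [mem_Ioi, not_lt]; exact hu.trans (by positivity)) _
      · rw [indicator_of_mem (mem_Ioi.2 hu)]
        obtain ⟨n, hn⟩ := exists_nat_one_div_lt hu
        apply le_antisymm
        · refine le_trans (le_of_eq ?_) (le_iSup _ n)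
          rw [indicator_of_mem (mem_Ioi.2 ?_)]
          exact_mod_cast hn
        · exact iSup_le fun k => indicator_le_self _ _ _
    have hmono : Monotone (fun n : ℕ => fun u => (Ioi (1/(n+1):ℝ)).indicator T u) := by
      intro n n' hnn' u
      refine indicator_le_indicator_of_subset (Ioi_subset_Ioi ?_) (fun _ => by simp) u
      refine one_div_le_one_div_of_le (by positivity) ?_
      have : (n:ℝ) ≤ (n':ℝ) := Nat.cast_le.2 hnn'
      linarith
    rw [hpt, lintegral_iSup (fun n => hTmeas.indicator measurableSet_Ioi) hmono]
    exact iSup_le fun n => by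
      rw [lintegral_indicator measurableSet_Ioi]; exact key n
  -- main estimate
  set c : ℝ := γ * m with hcdef
  have hc : 0 < c := mul_pos hγ0 hm
  have hbmc : 0 < β * m - c := by rw [hcdef]; nlinarith
  have hpt : ∀ x, ENNReal.ofReal (Real.exp (-γ * m * w x))
      ≤ 1 + ENNReal.ofReal (Real.exp (c * max (-w x) 0) - 1) := by
    intro x
    have h1 : Real.exp (-γ * m * w x) ≤ Real.exp (c * max (-w x) 0) := by
      apply Real.exp_le_exp.2
      have h2 : -γ * m * w x = c * (-w x) := by rw [hcdef]; ring
      rw [h2]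
      exact mul_le_mul_of_nonneg_left (le_max_left _ _) hc.le
    have h3 : (1:ℝ) ≤ Real.exp (c * max (-w x) 0) :=
      Real.one_le_exp (by positivity)
    calc ENNReal.ofReal (Real.exp (-γ * m * w x))
        ≤ ENNReal.ofReal (Real.exp (c * max (-w x) 0)) := ENNReal.ofReal_le_ofReal h1
      _ = 1 + ENNReal.ofReal (Real.exp (c * max (-w x) 0) - 1) := by
          rw [← ENNReal.ofReal_one, ← ENNReal.ofReal_add zero_le_one (by linarith)]
          congr 1; ring
  -- layer cake for the exponential
  have hlc : ∫⁻ x, ENNReal.ofReal (Real.exp (c * max (-w x) 0) - 1) ∂μ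
      = ∫⁻ t in Ioi (0:ℝ), T t * ENNReal.ofReal (c * Real.exp (c * t)) := by
    have f_nn : 0 ≤ᵐ[μ] fun x => max (-w x) 0 :=
      Eventually.of_forall fun x => le_max_right _ _
    have f_mble : AEMeasurable (fun x => max (-w x) 0) μ :=
      (hw.neg.max measurable_const).aemeasurable
    have g_cont : Continuous fun s : ℝ => c * Real.exp (c * s) := by continuity
    have g_intble : ∀ t > 0, IntervalIntegrable (fun s => c * Real.exp (c * s)) volume 0 t :=
      fun t _ => g_cont.intervalIntegrable 0 t
    have key := lintegral_comp_eq_lintegral_meas_le_mul μ f_nn f_mble g_intble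
      (Eventually.of_forall fun t => by positivity)
    have hval : ∀ x, (∫ s in (0:ℝ)..(max (-w x) 0), c * Real.exp (c * s))
        = Real.exp (c * max (-w x) 0) - 1 := by
      intro x
      have h0 : (c * ∫ s in (0:ℝ)..(max (-w x) 0), Real.exp (c * s))
          = ∫ u in (c * 0)..(c * max (-w x) 0), Real.exp u :=
        intervalIntegral.mul_integral_comp_mul_left (f := Real.exp) (c := c)
      rw [intervalIntegral.integral_const_mul, h0, integral_exp, mul_zero, Real.exp_zero]
    have hsets : ∀ t : ℝ, 0 < t → {a : X | t ≤ max (-w a) 0} = {a : X | w a ≤ -t} := by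
      intro t ht
      ext a
      simp only [mem_setOf_eq, le_max_iff]
      constructor
      · rintro (h | h)
        · linarith
        · linarith
      · intro h; left; linarith
    calc ∫⁻ x, ENNReal.ofReal (Real.exp (c * max (-w x) 0) - 1) ∂μ
        = ∫⁻ x, ENNReal.ofReal (∫ s in (0:ℝ)..(max (-w x) 0), c * Real.exp (c * s)) ∂μ := by
          simp_rw [hval]
      _ = ∫⁻ t in Ioi (0:ℝ), μ {a | t ≤ max (-w a) 0} * ENNReal.ofReal (c * Real.exp (c * t)) :=
          key
      _ = ∫⁻ t in Ioi (0:ℝ), T t * ENNReal.ofReal (c * Real.exp (c * t)) := by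
          refine setLIntegral_congr_fun measurableSet_Ioi (fun t ht => ?_)
          rw [hsets t ht, hTdef]
  -- the two pieces
  have hpiece1 : ∫⁻ t in Ioi (0:ℝ), T t * ENNReal.ofReal c ≤ ENNReal.ofReal (C₁ * K * c) := by
    rw [lintegral_mul_const _ hTmeas]
    calc (∫⁻ u in Ioi (0:ℝ), T u) * ENNReal.ofReal c
        ≤ ENNReal.ofReal (C₁ * K) * ENNReal.ofReal c := mul_le_mul_left hG0 _
      _ = ENNReal.ofReal (C₁ * K * c) := (ENNReal.ofReal_mul (by positivity)).symm
  have hkmeas : Measurable fun s : ℝ => ENNReal.ofReal (c ^ 2 * Real.exp (c * s)) := by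
    fun_prop
  have hpiece2 : ∫⁻ t in Ioi (0:ℝ), T t * ENNReal.ofReal (c * Real.exp (c * t) - c)
      ≤ ENNReal.ofReal (c ^ 2 * (C₁ * K) / (β * m - c)) := by
    obtain ⟨F, hFdef⟩ : ∃ F : ℝ × ℝ → ℝ≥0∞, F = fun p =>
      ENNReal.ofReal (c ^ 2 * Real.exp (c * p.1)) *
        {q : ℝ × ℝ | q.1 < q.2}.indicator (fun q => T q.2) p := ⟨_, rfl⟩
    have hFmeas : Measurable F := by
      rw [hFdef]
      refine Measurable.mul (hkmeas.comp measurable_fst) ?_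
      exact (hTmeas.comp measurable_snd).indicator
        (measurableSet_lt measurable_fst measurable_snd)
    have hinner : ∀ t : ℝ, 0 < t →
        T t * ENNReal.ofReal (c * Real.exp (c * t) - c)
          = ∫⁻ s in Ioi (0:ℝ), F (s, t) := by
      intro t ht
      have heq : ∀ s : ℝ, F (s, t)
          = T t * (Iio t).indicator (fun s => ENNReal.ofReal (c ^ 2 * Real.exp (c * s))) s := by
        intro s
        simp only [hFdef]
        by_cases hst : s < t
        · rw [indicator_of_mem (show (s,t) ∈ {q : ℝ × ℝ | q.1 < q.2} from hst),
            indicator_of_mem (mem_Iio.2 hst)]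
          exact mul_comm _ _
        · rw [indicator_of_notMem (show (s,t) ∉ {q : ℝ × ℝ | q.1 < q.2} from hst),
            indicator_of_notMem (show s ∉ Iio t by simpa using hst)]
          rw [mul_zero, mul_zero]
      simp_rw [heq]
      rw [lintegral_const_mul _ (hkmeas.indicator measurableSet_Iio)]
      congr 1
      rw [lintegral_indicator measurableSet_Iio, Measure.restrict_restrict measurableSet_Iio]
      have hset2 : Iio t ∩ Ioi (0:ℝ) = Ioo 0 t := by
        ext u; simp only [mem_inter_iff, mem_Iio, mem_Ioi, mem_Ioo]; tauto
      rw [hset2]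
      have hcont : Continuous fun s : ℝ => c ^ 2 * Real.exp (c * s) := by continuity
      have hint2 : IntegrableOn (fun s : ℝ => c ^ 2 * Real.exp (c * s)) (Ioo 0 t) :=
        (hcont.integrableOn_Icc).mono_set Ioo_subset_Icc_self
      rw [← ofReal_integral_eq_lintegral_ofReal hint2
        (Eventually.of_forall fun s => by positivity)]
      congr 1
      rw [← integral_Ioc_eq_integral_Ioo, ← intervalIntegral.integral_of_le ht.le]
      have h0 : (c * ∫ s in (0:ℝ)..t, Real.exp (c * s))
          = ∫ u in (c * 0)..(c * t), Real.exp u :=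
        intervalIntegral.mul_integral_comp_mul_left (f := Real.exp) (c := c)
      rw [integral_exp, mul_zero, Real.exp_zero] at h0
      rw [intervalIntegral.integral_const_mul]
      symm
      calc c ^ 2 * ∫ s in (0:ℝ)..t, Real.exp (c * s)
          = c * (c * ∫ s in (0:ℝ)..t, Real.exp (c * s)) := by ring
        _ = c * (Real.exp (c * t) - 1) := by rw [h0]
        _ = c * Real.exp (c * t) - c := by ring
    have hswap : ∫⁻ t in Ioi (0:ℝ), T t * ENNReal.ofReal (c * Real.exp (c * t) - c)
        = ∫⁻ s in Ioi (0:ℝ), ∫⁻ t in Ioi (0:ℝ), F (s, t) := by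
      rw [setLIntegral_congr_fun measurableSet_Ioi
        (fun t ht => hinner t ht)]
      exact lintegral_lintegral_swap (f := fun t s => F (s, t))
        ((hFmeas.comp measurable_swap).aemeasurable)
    rw [hswap]
    have hub : ∀ s : ℝ, s ∈ Ioi (0:ℝ) → (∫⁻ t in Ioi (0:ℝ), F (s, t))
        ≤ ENNReal.ofReal (c ^ 2 * (C₁ * K)) * ENNReal.ofReal (Real.exp (-((β * m - c) * s))) := by
      intro s hs
      have heq2 : ∀ t : ℝ, F (s, t)
          = ENNReal.ofReal (c ^ 2 * Real.exp (c * s)) * (Ioi s).indicator T t := by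
        intro t
        simp only [hFdef]
        by_cases hst : s < t
        · rw [indicator_of_mem (show (s,t) ∈ {q : ℝ × ℝ | q.1 < q.2} from hst),
            indicator_of_mem (mem_Ioi.2 hst)]
        · rw [indicator_of_notMem (show (s,t) ∉ {q : ℝ × ℝ | q.1 < q.2} from hst),
            indicator_of_notMem (show t ∉ Ioi s by simpa using hst)]
      have h3 : ∫⁻ t in Ioi (0:ℝ), F (s, t)
          = ENNReal.ofReal (c ^ 2 * Real.exp (c * s)) * ∫⁻ t in Ioi s, T t := by
        simp_rw [heq2]
        rw [lintegral_const_mul _ (hTmeas.indicator measurableSet_Ioi)]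
        congr 1
        rw [lintegral_indicator measurableSet_Ioi, Measure.restrict_restrict measurableSet_Ioi]
        congr 1
        rw [inter_eq_left.2 (Ioi_subset_Ioi (le_of_lt hs))]
      rw [h3]
      refine (mul_le_mul_right (hG s hs) _).trans (le_of_eq ?_)
      rw [← ENNReal.ofReal_mul (by positivity), ← ENNReal.ofReal_mul (by positivity)]
      congr 1
      have hexp : Real.exp (c * s) * Real.exp (-(β * (m * s))) = Real.exp (-((β * m - c) * s)) := by
        rw [← Real.exp_add]; ring_nf
      rw [← hexp]; ring
    calc ∫⁻ s in Ioi (0:ℝ), ∫⁻ t in Ioi (0:ℝ), F (s, t)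
        ≤ ∫⁻ s in Ioi (0:ℝ), ENNReal.ofReal (c ^ 2 * (C₁ * K)) *
            ENNReal.ofReal (Real.exp (-((β * m - c) * s))) :=
          setLIntegral_mono' measurableSet_Ioi hub
      _ = ENNReal.ofReal (c ^ 2 * (C₁ * K)) *
            ∫⁻ s in Ioi (0:ℝ), ENNReal.ofReal (Real.exp (-((β * m - c) * s))) := by
          rw [lintegral_const_mul _
            (by fun_prop : Measurable fun s : ℝ => ENNReal.ofReal (Real.exp (-((β * m - c) * s))))]
      _ = ENNReal.ofReal (c ^ 2 * (C₁ * K) / (β * m - c)) := by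
          rw [lint_exp_aux hbmc, ← ENNReal.ofReal_mul (by positivity)]
          congr 1
          field_simp
  -- conclusion
  have hmain : ∫⁻ x, ENNReal.ofReal (Real.exp (-γ * m * w x)) ∂μ
      ≤ μ Set.univ + ENNReal.ofReal (C₁ * K * γ * Real.exp (β * m) / (β - γ)) := by
    have hsplit : ∫⁻ t in Ioi (0:ℝ), T t * ENNReal.ofReal (c * Real.exp (c * t))
        = (∫⁻ t in Ioi (0:ℝ), T t * ENNReal.ofReal c)
          + ∫⁻ t in Ioi (0:ℝ), T t * ENNReal.ofReal (c * Real.exp (c * t) - c) := by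
      rw [← lintegral_add_left (hTmeas.mul_const _)]
      refine setLIntegral_congr_fun measurableSet_Ioi (fun t ht => ?_)
      have h4 : (0:ℝ) ≤ c * Real.exp (c * t) - c := by
        nlinarith [Real.one_le_exp (le_of_lt (mul_pos hc ht))]
      rw [← mul_add, ← ENNReal.ofReal_add hc.le h4]
      congr 2
      ring
    calc ∫⁻ x, ENNReal.ofReal (Real.exp (-γ * m * w x)) ∂μ
        ≤ ∫⁻ x, (1 + ENNReal.ofReal (Real.exp (c * max (-w x) 0) - 1)) ∂μ :=
          lintegral_mono hpt
      _ = μ Set.univ + ∫⁻ x, ENNReal.ofReal (Real.exp (c * max (-w x) 0) - 1) ∂μ := by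
          rw [lintegral_add_left measurable_const, lintegral_const, one_mul]
      _ ≤ μ Set.univ + (ENNReal.ofReal (C₁ * K * c) +
            ENNReal.ofReal (c ^ 2 * (C₁ * K) / (β * m - c))) := by
          refine add_le_add le_rfl ?_
          rw [hlc, hsplit]
          exact add_le_add hpiece1 hpiece2
      _ ≤ μ Set.univ + ENNReal.ofReal (C₁ * K * γ * Real.exp (β * m) / (β - γ)) := by
          refine add_le_add le_rfl ?_
          rw [← ENNReal.ofReal_add (by positivity) (by positivity)]
          refine ENNReal.ofReal_le_ofReal ?_
          have hβγ : 0 < β - γ := by linarith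
          have hexp : m * β ≤ Real.exp (β * m) := by
            nlinarith [Real.add_one_le_exp (β * m)]
          have key2 : C₁ * K * c + c ^ 2 * (C₁ * K) / (β * m - c)
              = C₁ * K * γ * (m * β) / (β - γ) := by
            rw [hcdef]
            have h5 : β * m - γ * m ≠ 0 := by nlinarith
            have h6 : β - γ ≠ 0 := by linarith
            field_simp
            ring
          rw [key2]
          gcongr
  refine ⟨hmain, ?_⟩
  have hfin : ∫⁻ x, ENNReal.ofReal (Real.exp (-γ * m * w x)) ∂μ < ⊤ :=
    lt_of_le_of_lt hmain
      (ENNReal.add_lt_top.2 ⟨measure_lt_top μ _, ENNReal.ofReal_lt_top⟩)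
  constructor
  · exact ((hw.const_mul (-γ * m)).exp).aestronglyMeasurable
  · rw [hasFiniteIntegral_iff_ofReal (Eventually.of_forall fun x => (Real.exp_pos _).le)]
    exact hfin
end
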